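/- Let X be a continuous martingale with respect to an increasing filtration (𝒫_t) and simultaneously a (reversed) martingale with respect to a decreasing filtration (ℱ_t) with X_t measurable w.r.t. both 𝒫_t and ℱ_t, and X_t ∈ L². Then X is a.s. constant on [0,T]. -/

import Mathlib

open MeasureTheory

noncomputable section

/-! Nelson's argument: for `0 ≤ t ≤ T`, the forward martingale property at time `0` and the
backward one at time `t` give `E[X₀ (X_t - X₀)] = 0 = E[X_t (X₀ - X_t)]`, so
`E[(X_t - X₀)²] = E[X_t (X_t - X₀)] - E[X₀ (X_t - X₀)] = 0` and `X_t = X₀` a.s. for each fixed `t`.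
Continuity of the paths upgrades this to a single null set, via a countable dense set of times. -/

section

variable {Ω : Type*} {m m0 : MeasurableSpace Ω} {μ : Measure Ω}

theorem integral_mul_eq_zero_of_condExp_eq_zero (hm : m ≤ m0) [SigmaFinite (μ.trim hm)]
    {f g : Ω → ℝ} (hf : StronglyMeasurable[m] f) (hfg : Integrable (f * g) μ)
    (hg : Integrable g μ) (hcond : μ[g|m] =ᵐ[μ] 0) : ∫ ω, (f * g) ω ∂μ = 0 :=
  calc ∫ ω, (f * g) ω ∂μ = ∫ ω, (μ[f * g|m]) ω ∂μ := (integral_condExp hm).symm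
    _ = ∫ ω, (f * μ[g|m]) ω ∂μ :=
      integral_congr_ae (condExp_mul_of_stronglyMeasurable_left hf hfg hg)
    _ = ∫ ω, (f * 0 : Ω → ℝ) ω ∂μ :=
      integral_congr_ae ((Filter.EventuallyEq.refl _ f).mul hcond)
    _ = 0 := by simp

theorem ae_eq_of_integral_mul_sub_eq_zero {f g : Ω → ℝ} (hf : MemLp f 2 μ) (hg : MemLp g 2 μ)
    (hg_orth : ∫ ω, (g * (f - g)) ω ∂μ = 0) (hf_orth : ∫ ω, (f * (g - f)) ω ∂μ = 0) :
    f =ᵐ[μ] g := by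
  have hsq : ∫ ω, (f - g) ω ^ 2 ∂μ = 0 :=
    calc ∫ ω, (f - g) ω ^ 2 ∂μ = -∫ ω, (f * (g - f)) ω ∂μ - ∫ ω, (g * (f - g)) ω ∂μ := by
          rw [← integral_neg, ← integral_sub (f := fun ω => -(f * (g - f)) ω)
            (hf.integrable_mul (hg.sub hf)).neg (hg.integrable_mul (hf.sub hg))]
          congr with ω
          simp only [Pi.sub_apply, Pi.mul_apply]
          ring
      _ = 0 := by rw [hf_orth, hg_orth, neg_zero, sub_zero]
  have hzero : (fun ω => (f - g) ω ^ 2) =ᵐ[μ] 0 :=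
    (integral_eq_zero_iff_of_nonneg (fun ω => sq_nonneg _) (hf.sub hg).integrable_sq).mp hsq
  filter_upwards [hzero] with ω hω
  simpa [sub_eq_zero] using hω

end

theorem ae_forall_eq_of_continuousOn {Ω ι E : Type*} {m0 : MeasurableSpace Ω} {μ : Measure Ω}
    [TopologicalSpace ι] [TopologicalSpace.PseudoMetrizableSpace ι]
    [TopologicalSpace.SeparableSpace ι] [TopologicalSpace E] [T2Space E]
    {X : ι → Ω → E} {c : Ω → E} {s : Set ι} (hcont : ∀ ω, ContinuousOn (fun t => X t ω) s)
    (h : ∀ t ∈ s, X t =ᵐ[μ] c) : ∀ᵐ ω ∂μ, ∀ t ∈ s, X t ω = c ω := by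
  obtain ⟨D, hDs, hDc, hsD⟩ :=
    (TopologicalSpace.IsSeparable.of_separableSpace s).exists_countable_dense_subset
  have hD : ∀ᵐ ω ∂μ, ∀ t ∈ D, X t ω = c ω := (ae_ball_iff hDc).mpr fun t ht => h t (hDs ht)
  filter_upwards [hD] with ω hω
  exact Set.EqOn.of_subset_closure hω (hcont ω) continuousOn_const hDs hsD

theorem stmt16_general {Ω : Type*} {m0 : MeasurableSpace Ω} (μ : Measure Ω)
    [IsProbabilityMeasure μ] (T : ℝ)
    (X : ℝ → Ω → ℝ) (P F : ℝ → MeasurableSpace Ω)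
    (hPle : ∀ t, P t ≤ m0) (hFle : ∀ t, F t ≤ m0)
    (hXP : ∀ t, Measurable[P t] (X t)) (hXF : ∀ t, Measurable[F t] (X t))
    (hL2 : ∀ t, MemLp (X t) 2 μ)
    (hXcont : ∀ ω, ContinuousOn (fun t => X t ω) (Set.Icc 0 T))
    (hmart : ∀ s t : ℝ, 0 ≤ s → s ≤ t → t ≤ T →
      μ[fun ω => X t ω - X s ω | P s] =ᵐ[μ] 0)
    (hrev : ∀ s t : ℝ, 0 ≤ s → s ≤ t → t ≤ T →
      μ[fun ω => X s ω - X t ω | F t] =ᵐ[μ] 0) :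
    ∀ᵐ ω ∂μ, ∀ t ∈ Set.Icc 0 T, X t ω = X 0 ω := by
  refine ae_forall_eq_of_continuousOn hXcont fun t ⟨ht0, htT⟩ => ?_
  have hfwd := (hL2 t).sub (hL2 0)
  have hbwd := (hL2 0).sub (hL2 t)
  refine ae_eq_of_integral_mul_sub_eq_zero (hL2 t) (hL2 0) ?_ ?_
  · exact integral_mul_eq_zero_of_condExp_eq_zero (hPle 0) (hXP 0).stronglyMeasurable
      ((hL2 0).integrable_mul hfwd) (hfwd.integrable one_le_two) (hmart 0 t le_rfl ht0 htT)
  · exact integral_mul_eq_zero_of_condExp_eq_zero (hFle t) (hXF t).stronglyMeasurable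
      ((hL2 t).integrable_mul hbwd) (hbwd.integrable one_le_two) (hrev 0 t le_rfl ht0 htT)

/-- Nelson: a continuous square-integrable process that is a
martingale w.r.t. an increasing filtration `P` and a reversed martingale
w.r.t. a decreasing filtration `F`, adapted to both, is a.s. constant on `[0,T]`. -/
theorem stmt16 {Ω : Type*} {m0 : MeasurableSpace Ω} (μ : Measure Ω)
    [IsProbabilityMeasure μ] (T : ℝ) (hT : 0 < T)
    (X : ℝ → Ω → ℝ) (P F : ℝ → MeasurableSpace Ω)
    (hPmono : ∀ s t : ℝ, s ≤ t → P s ≤ P t)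
    (hFanti : ∀ s t : ℝ, s ≤ t → F t ≤ F s)
    (hPle : ∀ t, P t ≤ m0) (hFle : ∀ t, F t ≤ m0)
    (hXP : ∀ t, Measurable[P t] (X t)) (hXF : ∀ t, Measurable[F t] (X t))
    (hL2 : ∀ t, MemLp (X t) 2 μ)
    (hXcont : ∀ ω, ContinuousOn (fun t => X t ω) (Set.Icc 0 T))
    (hmart : ∀ s t : ℝ, 0 ≤ s → s ≤ t → t ≤ T →
      μ[fun ω => X t ω - X s ω | P s] =ᵐ[μ] 0)
    (hrev : ∀ s t : ℝ, 0 ≤ s → s ≤ t → t ≤ T →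
      μ[fun ω => X s ω - X t ω | F t] =ᵐ[μ] 0) :
    ∀ᵐ ω ∂μ, ∀ t ∈ Set.Icc 0 T, X t ω = X 0 ω :=
  stmt16_general μ T X P F hPle hFle hXP hXF hL2 hXcont hmart hrev

end
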